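/- Let f : ℝ → ℝ and u : ℝ → ℝ be of class C⁴, fix x ∈ ℝ and κ ∈ ℝ. Then the central flux balance of the κ-scheme has the pointwise expansion (1/(2h))·(f(uL(u,h)) + f(uR(u,h)) − f(uL⁻(u,h)) − f(uR⁻(u,h))) = (f∘u)'(x) + (1/24)·( f'''(u(x))·u'(x)³ + 6κ·f''(u(x))·u'(x)·u''(x) + 2·(3κ−1)·f'(u(x))·u'''(x) )·h² + O(h³) as h → 0⁺. -/

import Mathlib

open Asymptotics Filter Set MeasureTheory

noncomputable def uL (κ x : ℝ) (v : ℝ → ℝ) (h : ℝ) : ℝ :=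
  (v x + v (x + h)) / 2 - ((1 - κ) / 4) * (v (x + h) - 2 * v x + v (x - h))

noncomputable def uR (κ x : ℝ) (v : ℝ → ℝ) (h : ℝ) : ℝ :=
  (v (x + h) + v x) / 2 - ((1 - κ) / 4) * (v (x + 2 * h) - 2 * v (x + h) + v x)

/-- Left-face interpolated value from the left: same formula with `x` replaced by `x - h`. -/
noncomputable def uLm (κ x : ℝ) (v : ℝ → ℝ) (h : ℝ) : ℝ := uL κ (x - h) v h

/-- Left-face interpolated value from the right: same formula with `x` replaced by `x - h`. -/
noncomputable def uRm (κ x : ℝ) (v : ℝ → ℝ) (h : ℝ) : ℝ := uR κ (x - h) v h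

/-!
Each face value is an affine combination (weights summing to one) of three values of `u`, so
Taylor's theorem gives it as `u x + a h + b h² + c h³ + O(h⁴)`; composing with the cubic Taylor
polynomial of `f` at `u x` gives such an expansion for `f` at the face values as well. The
left-face values are the right-face values with `h` replaced by `-h`, so the flux balance is the
odd part `Φ h - Φ (-h)` of `Φ h = f (uL h) + f (uR h)`: the even coefficients cancel, and
division by `2h` leaves the `h` and `h³` coefficients of `Φ`, which are `(f ∘ u)' x` and the
stated `h²` coefficient.
-/

open Topology

theorem taylor_isBigO_univ {E : Type*} [NormedAddCommGroup E] [NormedSpace ℝ E] {f : ℝ → E}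
    {x₀ : ℝ} {n : ℕ} (hf : ContDiff ℝ (n + 1) f) :
    (fun x ↦ f x - taylorWithinEval f n univ x₀ x) =O[𝓝 x₀] fun x ↦ (x - x₀) ^ (n + 1) := by
  have hlittle := (taylor_isLittleO_univ (x₀ := x₀) (n := n + 1) (by exact_mod_cast hf)).isBigO
  have hterm : (fun x ↦ (((n + 1 : ℝ) * n.factorial)⁻¹ * (x - x₀) ^ (n + 1)) •
      iteratedDerivWithin (n + 1) f univ x₀) =O[𝓝 x₀] fun x ↦ (x - x₀) ^ (n + 1) :=
    isBigO_of_le' _ fun x ↦ by rw [norm_smul, norm_mul, mul_right_comm]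
  refine (hlittle.add hterm).congr_left fun x ↦ ?_
  rw [taylorWithinEval_succ]
  abel

theorem ContDiff.isBigO_sub_taylor_three {φ : ℝ → ℝ} (hφ : ContDiff ℝ 4 φ) (a : ℝ) :
    (fun x ↦ φ x - (φ a + deriv φ a * (x - a) + iteratedDeriv 2 φ a * (x - a) ^ 2 / 2
      + iteratedDeriv 3 φ a * (x - a) ^ 3 / 6)) =O[𝓝 a] fun x ↦ (x - a) ^ 4 := by
  refine (taylor_isBigO_univ (n := 3) hφ).congr_left fun x ↦ ?_
  simp [taylor_within_apply, iteratedDerivWithin_univ, Nat.factorial]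
  ring

theorem ContDiff.isBigO_taylor_three_comp {φ : ℝ → ℝ} (hφ : ContDiff ℝ 4 φ) (a : ℝ)
    {s : ℝ → ℝ} (hs : s =O[𝓝 0] fun h ↦ h) :
    (fun h ↦ φ (a + s h) - (φ a + deriv φ a * s h + iteratedDeriv 2 φ a * s h ^ 2 / 2
      + iteratedDeriv 3 φ a * s h ^ 3 / 6)) =O[𝓝 0] fun h ↦ h ^ 4 := by
  have hs₀ : Tendsto (fun h ↦ a + s h) (𝓝 0) (𝓝 a) := by
    simpa using (hs.trans_tendsto tendsto_id).const_add a
  have htaylor := (hφ.isBigO_sub_taylor_three a).comp_tendsto hs₀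
  simp only [Function.comp_def, add_sub_cancel_left] at htaylor
  exact htaylor.trans (hs.pow 4)

theorem HasStrictFDerivAt.isBigO_comp_sub_comp {E F α : Type*} [NormedAddCommGroup E]
    [NormedSpace ℝ E] [NormedAddCommGroup F] [NormedSpace ℝ F] {f : E → F} {f' : E →L[ℝ] F}
    {y : E} (hf : HasStrictFDerivAt f f' y) {l : Filter α} {v w : α → E}
    (hv : Tendsto v l (𝓝 y)) (hw : Tendsto w l (𝓝 y)) :
    (fun t ↦ f (v t) - f (w t)) =O[l] fun t ↦ v t - w t :=
  hf.isBigO_sub.comp_tendsto (hv.prodMk_nhds hw)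

def HasCubicExpansion (v : ℝ → ℝ) (c₀ c₁ c₂ c₃ : ℝ) : Prop :=
  (fun h ↦ v h - (c₀ + c₁ * h + c₂ * h ^ 2 + c₃ * h ^ 3)) =O[𝓝 0] fun h ↦ h ^ 4

namespace HasCubicExpansion

variable {v w : ℝ → ℝ} {a₀ a₁ a₂ a₃ b₀ b₁ b₂ b₃ : ℝ}

theorem congr (hv : HasCubicExpansion v a₀ a₁ a₂ a₃)
    (h : ∀ t, v t - (a₀ + a₁ * t + a₂ * t ^ 2 + a₃ * t ^ 3)
      = w t - (b₀ + b₁ * t + b₂ * t ^ 2 + b₃ * t ^ 3)) :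
    HasCubicExpansion w b₀ b₁ b₂ b₃ :=
  IsBigO.congr_left hv h

theorem add (hv : HasCubicExpansion v a₀ a₁ a₂ a₃) (hw : HasCubicExpansion w b₀ b₁ b₂ b₃) :
    HasCubicExpansion (fun h ↦ v h + w h) (a₀ + b₀) (a₁ + b₁) (a₂ + b₂) (a₃ + b₃) :=
  (IsBigO.add hv hw).congr_left fun t ↦ by ring

theorem sub (hv : HasCubicExpansion v a₀ a₁ a₂ a₃) (hw : HasCubicExpansion w b₀ b₁ b₂ b₃) :
    HasCubicExpansion (fun h ↦ v h - w h) (a₀ - b₀) (a₁ - b₁) (a₂ - b₂) (a₃ - b₃) :=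
  (IsBigO.sub hv hw).congr_left fun t ↦ by ring

theorem const_mul (hv : HasCubicExpansion v a₀ a₁ a₂ a₃) (r : ℝ) :
    HasCubicExpansion (fun h ↦ r * v h) (r * a₀) (r * a₁) (r * a₂) (r * a₃) :=
  (IsBigO.const_mul_left hv r).congr_left fun t ↦ by ring

theorem comp_neg (hv : HasCubicExpansion v a₀ a₁ a₂ a₃) :
    HasCubicExpansion (fun h ↦ v (-h)) a₀ (-a₁) a₂ (-a₃) := by
  refine (IsBigO.comp_tendsto hv (continuous_neg.tendsto' 0 0 neg_zero)).congr
    (fun t ↦ ?_) (fun t ↦ ?_) <;> simp only [Function.comp_apply] <;> ring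

theorem tendsto (hv : HasCubicExpansion v a₀ a₁ a₂ a₃) : Tendsto v (𝓝 0) (𝓝 a₀) := by
  have hrem := IsBigO.trans_tendsto hv (by simpa using (continuous_pow 4).tendsto (0 : ℝ))
  have hpoly : Tendsto (fun h : ℝ ↦ a₀ + a₁ * h + a₂ * h ^ 2 + a₃ * h ^ 3) (𝓝 0) (𝓝 a₀) :=
    (by fun_prop : Continuous _).tendsto' 0 a₀ (by simp)
  simpa using hrem.add hpoly

theorem sub_comp_neg (hv : HasCubicExpansion v a₀ a₁ a₂ a₃) :
    HasCubicExpansion (fun h ↦ v h - v (-h)) 0 (2 * a₁) 0 (2 * a₃) :=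
  (hv.sub hv.comp_neg).congr fun t ↦ by ring

theorem isBigO_div_sub (hv : HasCubicExpansion v 0 a₁ a₂ a₃) :
    (fun h ↦ v h / h - (a₁ + a₂ * h + a₃ * h ^ 2)) =O[𝓝[≠] 0] fun h ↦ h ^ 3 := by
  have hrem := (IsBigO.mono hv nhdsWithin_le_nhds).mul (isBigO_refl (fun h : ℝ ↦ h⁻¹) (𝓝[≠] 0))
  refine hrem.congr' ?_ ?_ <;> filter_upwards [self_mem_nhdsWithin] with h (hh : h ≠ 0)
  · field_simp
    ring
  · field_simp

end HasCubicExpansion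

theorem ContDiff.hasCubicExpansion_comp_add_mul {u : ℝ → ℝ} (hu : ContDiff ℝ 4 u) (x c : ℝ) :
    HasCubicExpansion (fun h ↦ u (x + c * h)) (u x) (c * deriv u x)
      (c ^ 2 * iteratedDeriv 2 u x / 2) (c ^ 3 * iteratedDeriv 3 u x / 6) :=
  (hu.isBigO_taylor_three_comp x (isBigO_const_mul_self c _ _)).congr_left fun h ↦ by ring

theorem hasCubicExpansion_cubic_comp_cubic (e₁ e₂ e₃ a b c : ℝ) :
    HasCubicExpansion
      (fun h ↦ e₁ * (a * h + b * h ^ 2 + c * h ^ 3) + e₂ * (a * h + b * h ^ 2 + c * h ^ 3) ^ 2 / 2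
        + e₃ * (a * h + b * h ^ 2 + c * h ^ 3) ^ 3 / 6)
      0 (e₁ * a) (e₁ * b + e₂ * a ^ 2 / 2) (e₁ * c + e₂ * a * b + e₃ * a ^ 3 / 6) := by
  -- with `s = h σ`, `σ = a + b h + c h²`: `s² - a²h² - 2ab h³ = h⁴ (2ac + (b + ch)²)` and
  -- `s³ - a³h³ = h⁴ (b + ch) (σ² + σa + a²)`
  set R : ℝ → ℝ := fun h ↦ e₂ * (2 * a * c + (b + c * h) ^ 2) / 2
    + e₃ * (b + c * h) * ((a + b * h + c * h ^ 2) ^ 2 + (a + b * h + c * h ^ 2) * a + a ^ 2) / 6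
  have hR : (fun h ↦ h ^ 4 * R h) =O[𝓝 0] fun h ↦ h ^ 4 := by
    simpa using (isBigO_refl (fun h : ℝ ↦ h ^ 4) _).mul
      (((by fun_prop : Continuous R).tendsto 0).isBigO_one ℝ)
  exact hR.congr_left fun h ↦ by simp only [R]; ring

theorem ContDiff.hasCubicExpansion_comp {f v : ℝ → ℝ} (hf : ContDiff ℝ 4 f) {y a b c : ℝ}
    (hv : HasCubicExpansion v y a b c) :
    HasCubicExpansion (fun h ↦ f (v h)) (f y) (deriv f y * a)
      (deriv f y * b + iteratedDeriv 2 f y * a ^ 2 / 2)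
      (deriv f y * c + iteratedDeriv 2 f y * a * b + iteratedDeriv 3 f y * a ^ 3 / 6) := by
  set S : ℝ → ℝ := fun h ↦ a * h + b * h ^ 2 + c * h ^ 3
  have hSO : S =O[𝓝 0] fun h ↦ h := by
    simpa [S] using (by fun_prop : Differentiable ℝ S).differentiableAt.isBigO_sub (x₀ := 0)
  have hlip : (fun h ↦ f (v h) - f (y + S h)) =O[𝓝 0] fun h ↦ v h - (y + S h) :=
    (hf.hasStrictDerivAt (by norm_num)).hasStrictFDerivAt.isBigO_comp_sub_comp hv.tendsto
      (by simpa using (hSO.trans_tendsto tendsto_id).const_add y)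
  refine ((hlip.trans (hv.congr_left fun h ↦ by ring)).add
    ((hf.isBigO_taylor_three_comp y hSO).add (hasCubicExpansion_cubic_comp_cubic
      (deriv f y) (iteratedDeriv 2 f y) (iteratedDeriv 3 f y) a b c))).congr_left fun h ↦ ?_
  simp only [S]
  ring

-- `uL` is the combination `(1 - κ/2) u(x) + (1 + κ)/4 u(x + h) + (κ - 1)/4 u(x - h)`;
-- `uR` uses the same weights at `x + h`, `x`, `x + 2h`.
theorem hasCubicExpansion_uL {u : ℝ → ℝ} (hu : ContDiff ℝ 4 u) (κ x : ℝ) :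
    HasCubicExpansion (uL κ x u) (u x) (deriv u x / 2) (κ * iteratedDeriv 2 u x / 4)
      (iteratedDeriv 3 u x / 12) :=
  ((((hu.hasCubicExpansion_comp_add_mul x 0).const_mul (1 - κ / 2)).add
    ((hu.hasCubicExpansion_comp_add_mul x 1).const_mul ((1 + κ) / 4))).add
    ((hu.hasCubicExpansion_comp_add_mul x (-1)).const_mul ((κ - 1) / 4))).congr fun h ↦ by
      simp only [uL, zero_mul, add_zero, one_mul, neg_one_mul, ← sub_eq_add_neg]
      ring

theorem hasCubicExpansion_uR {u : ℝ → ℝ} (hu : ContDiff ℝ 4 u) (κ x : ℝ) :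
    HasCubicExpansion (uR κ x u) (u x) (deriv u x / 2) (κ * iteratedDeriv 2 u x / 4)
      ((3 * κ - 2) * iteratedDeriv 3 u x / 12) :=
  ((((hu.hasCubicExpansion_comp_add_mul x 1).const_mul (1 - κ / 2)).add
    ((hu.hasCubicExpansion_comp_add_mul x 0).const_mul ((1 + κ) / 4))).add
    ((hu.hasCubicExpansion_comp_add_mul x 2).const_mul ((κ - 1) / 4))).congr fun h ↦ by
      simp only [uR, zero_mul, add_zero, one_mul]
      ring

theorem uLm_eq_uR_neg (κ x : ℝ) (v : ℝ → ℝ) (h : ℝ) : uLm κ x v h = uR κ x v (-h) := by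
  rw [uLm, uL, uR, sub_add_cancel, show x - h - h = x + 2 * -h by ring, ← sub_eq_add_neg]
  ring

theorem uRm_eq_uL_neg (κ x : ℝ) (v : ℝ → ℝ) (h : ℝ) : uRm κ x v h = uL κ x v (-h) := by
  rw [uRm, uR, uL, sub_add_cancel, show x - h + 2 * h = x - -h by ring, ← sub_eq_add_neg]
  ring

theorem quick_flux_balance_pointwise_expansion (f u : ℝ → ℝ) (hf : ContDiff ℝ 4 f)
    (hu : ContDiff ℝ 4 u) (x κ : ℝ) :
    (fun h : ℝ =>
        (1 / (2 * h)) * (f (uL κ x u h) + f (uR κ x u h)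
          - f (uLm κ x u h) - f (uRm κ x u h))
        - (deriv (f ∘ u) x
           + (1 / 24) * (iteratedDeriv 3 f (u x) * (deriv u x) ^ 3
              + 6 * κ * iteratedDeriv 2 f (u x) * deriv u x * iteratedDeriv 2 u x
              + 2 * (3 * κ - 1) * deriv f (u x) * iteratedDeriv 3 u x) * h ^ 2))
      =O[nhdsWithin 0 (Set.Ioi 0)] fun h : ℝ => h ^ 3 := by
  have hflux := ((hf.hasCubicExpansion_comp (hasCubicExpansion_uL hu κ x)).add
    (hf.hasCubicExpansion_comp (hasCubicExpansion_uR hu κ x))).sub_comp_neg.isBigO_div_sub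
  have hchain : deriv (f ∘ u) x = deriv f (u x) * deriv u x :=
    deriv_comp x (hf.differentiable (by norm_num)).differentiableAt
      (hu.differentiable (by norm_num)).differentiableAt
  have hpos : 𝓝[>] (0 : ℝ) ≤ 𝓝[≠] 0 := nhdsWithin_mono _ fun h hh ↦ ne_of_gt hh
  refine ((hflux.const_mul_left (1 / 2)).mono hpos).congr_left fun h ↦ ?_
  rw [uLm_eq_uR_neg, uRm_eq_uL_neg, hchain]
  ring
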